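/- Let (C_n)_{n∈ω} be a partition of ω into infinite sets, let I ⊆ ω be infinite, and suppose S ⊆ Sym(ω) is a non-meager subset of the symmetric group Sym(ω). Then there exists σ ∈ S such that σ[C_n] ∩ I is infinite for every n ∈ ω. -/

import Mathlib

/-!
For fixed `n` and a finite `F ⊆ ω`, the permutations `σ` with `σ[Cₙ] ∩ I ⊆ F` form a closed
set with empty interior: a basic neighbourhood of `σ` only constrains `σ` on a finite set `D`,
and composing `σ` with a transposition sends some point of `Cₙ \ D` into `I \ F`. As there are
only countably many finite `F`, the permutations with `σ[Cₙ] ∩ I` finite form a meagre set, and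
so does their union over `n`; a non-meagre `S` is not covered by it.
-/

open Set Filter Topology Function

theorem isClosed_setOf_image_inter_subset {α β : Type*} [TopologicalSpace β]
    [DiscreteTopology β] (C : Set α) (I F : Set β) : IsClosed {f : α → β | f '' C ∩ I ⊆ F} := by
  have h : {f : α → β | f '' C ∩ I ⊆ F} =
      ⋂ x ∈ C, (fun f : α → β => f x) ⁻¹' {y | y ∈ I → y ∈ F} := by
    ext f
    simp only [subset_def, mem_inter_iff, mem_image, mem_ofPred_eq, mem_iInter, mem_preimage]
    grind
  rw [h]
  exact isClosed_biInter fun x _ => (isClosed_discrete _).preimage (continuous_apply x)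

theorem exists_bijective_eqOn_not_image_inter_subset {α : Type*} {σ : α → α}
    (hσ : Bijective σ) {C D I F : Set α} (hC : C.Infinite) (hD : D.Finite)
    (hIF : (I \ F).Infinite) :
    ∃ τ : α → α, Bijective τ ∧ EqOn τ σ D ∧ ¬τ '' C ∩ I ⊆ F := by
  classical
  obtain ⟨x, hxC, hxD⟩ := (hC.sdiff hD).nonempty
  obtain ⟨y, ⟨hyI, hyF⟩, hyD⟩ := (hIF.sdiff (hD.image σ)).nonempty
  refine ⟨Equiv.swap (σ x) y ∘ σ, (Equiv.swap (σ x) y).bijective.comp hσ, fun d hd => ?_, ?_⟩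
  · have hdx : σ d ≠ σ x := fun h => hxD (hσ.1 h ▸ hd)
    have hdy : σ d ≠ y := fun h => hyD ⟨d, hd, h⟩
    exact Equiv.swap_apply_of_ne_of_ne hdx hdy
  · exact fun h => hyF (h ⟨⟨x, hxC, Equiv.swap_apply_left _ _⟩, hyI⟩)

theorem interior_setOf_image_inter_subset_eq_empty {α : Type*} [TopologicalSpace α]
    [DiscreteTopology α] {C I F : Set α} (hC : C.Infinite) (hIF : (I \ F).Infinite) :
    interior {σ : {f : α → α // Bijective f} | σ.1 '' C ∩ I ⊆ F} = ∅ := by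
  refine eq_empty_of_forall_notMem fun σ hσ => ?_
  have hσA := mem_interior_iff_mem_nhds.mp hσ
  rw [nhds_subtype_eq_comap, mem_comap] at hσA
  obtain ⟨V, hV, hVA⟩ := hσA
  rw [nhds_pi, mem_pi'] at hV
  obtain ⟨D, t, ht, hDt⟩ := hV
  obtain ⟨τ, hτ, hτσ, hτF⟩ :=
    exists_bijective_eqOn_not_image_inter_subset σ.2 hC D.finite_toSet hIF
  refine hτF (hVA (hDt fun d hd => ?_) : (⟨τ, hτ⟩ : {f : α → α // Bijective f}) ∈ _)
  change τ d ∈ t d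
  rw [hτσ hd]
  exact mem_of_mem_nhds (ht d)

theorem isMeagre_setOf_image_inter_finite {α : Type*} [TopologicalSpace α] [DiscreteTopology α]
    [Countable α] {C I : Set α} (hC : C.Infinite) (hI : I.Infinite) :
    IsMeagre {σ : {f : α → α // Bijective f} | (σ.1 '' C ∩ I).Finite} := by
  have hcover : {σ : {f : α → α // Bijective f} | (σ.1 '' C ∩ I).Finite} ⊆
      ⋃ F ∈ {F : Set α | F.Finite}, {σ | σ.1 '' C ∩ I ⊆ F} :=
    fun σ hσ => mem_biUnion (x := σ.1 '' C ∩ I) hσ (subset_refl (σ.1 '' C ∩ I))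
  refine (isMeagre_biUnion Countable.ofPred_finite fun F hF => ?_).mono hcover
  have hclosed : IsClosed {σ : {f : α → α // Bijective f} | σ.1 '' C ∩ I ⊆ F} :=
    (isClosed_setOf_image_inter_subset C I F).preimage continuous_subtype_val
  exact (hclosed.isNowhereDense_iff.mpr
    (interior_setOf_image_inter_subset_eq_empty hC (hI.sdiff hF))).isMeagre

theorem stmt6_general (C : ℕ → Set ℕ)
    (hCinf : ∀ n, (C n).Infinite)
    (I : Set ℕ) (hI : I.Infinite)
    (S : Set {f : ℕ → ℕ // Function.Bijective f}) (hS : ¬IsMeagre S) :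
    ∃ σ ∈ S, ∀ n, (σ.1 '' C n ∩ I).Infinite := by
  by_contra! h
  refine hS ((isMeagre_iUnion fun n => isMeagre_setOf_image_inter_finite (hCinf n) hI).mono ?_)
  intro σ hσ
  obtain ⟨n, hn⟩ := h σ hσ
  exact mem_iUnion.mpr ⟨n, hn⟩

/-- Let `(C_n)` be a partition of `ω` into infinite sets, `I ⊆ ω` infinite, and
`S` a non-meager subset of the symmetric group `Sym(ω)` (as a subspace of `ω^ω`).
Then some `σ ∈ S` satisfies: `σ[C_n] ∩ I` is infinite for every `n`. -/
theorem stmt6 (C : ℕ → Set ℕ)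
    (hCinf : ∀ n, (C n).Infinite)
    (hCdisj : ∀ n m, n ≠ m → Disjoint (C n) (C m))
    (hCcov : (⋃ n, C n) = Set.univ)
    (I : Set ℕ) (hI : I.Infinite)
    (S : Set {f : ℕ → ℕ // Function.Bijective f}) (hS : ¬IsMeagre S) :
    ∃ σ ∈ S, ∀ n, (σ.1 '' C n ∩ I).Infinite :=
  stmt6_general C hCinf I hI S hS
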